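/- arXiv:1803.00866 — 2 statements merged into one kernel-verified Lean document; each statement's English description precedes it below -/
import Mathlib

section
/- For every integer n ≥ 2 there exists an injective group homomorphism from Thompson's group F_n into Thompson's group F_2 = F. -/
noncomputable section

namespace ThompsonPaper

/-- Homeomorphisms of a topological space form a group under composition,
with `(f * g) x = f (g x)`. -/
instance homeoGroup {α : Type*} [TopologicalSpace α] : Group (α ≃ₜ α) where
  mul f g := g.trans f
  one := Homeomorph.refl α
  inv := Homeomorph.symm
  mul_assoc _ _ _ := Homeomorph.ext fun _ => rfl
  one_mul _ := Homeomorph.ext fun _ => rfl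
  mul_one _ := Homeomorph.ext fun _ => rfl
  inv_mul_cancel f := Homeomorph.ext fun x => f.symm_apply_apply x

/-- `x` is an `n`-adic rational: `x = a / n ^ k` with `a` an integer, `k` a natural number. -/
def IsNAdic (n : ℕ) (x : ℝ) : Prop := ∃ a : ℤ, ∃ k : ℕ, x = (a : ℝ) / (n : ℝ) ^ k

/-- The unit interval `[0,1]`. -/
abbrev UnitInt : Type := Set.Icc (0 : ℝ) 1

/-- Membership in Thompson's group `F_n`: an orientation-preserving homeomorphism of
`[0,1]` which is piecewise affine with finitely many breakpoints, all breakpoints at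
`n`-adic rationals, and with the slope of every affine piece an integer power of `n`. -/
def InF (n : ℕ) (f : UnitInt ≃ₜ UnitInt) : Prop :=
  StrictMono f ∧
  ∃ m : ℕ, ∃ t : ℕ → ℝ, ∃ slope : ℕ → ℤ, ∃ c : ℕ → ℝ,
    0 < m ∧ t 0 = 0 ∧ t m = 1 ∧
    (∀ i, i < m → t i < t (i + 1)) ∧
    (∀ i, i ≤ m → IsNAdic n (t i)) ∧
    (∀ i, i < m → ∀ x : UnitInt, (x : ℝ) ∈ Set.Icc (t i) (t (i + 1)) →
      (f x : ℝ) = (n : ℝ) ^ (slope i) * (x : ℝ) + c i)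

/-- Thompson's group `F_n`, as a set of homeomorphisms of `[0,1]`. -/
def FnSet (n : ℕ) : Set (UnitInt ≃ₜ UnitInt) := { f | InF n f }

/-- Thompson's group `F_n`, as a subgroup of the homeomorphism group of `[0,1]`.
(The set `FnSet n` is closed under the group operations, so this subgroup has exactly
`FnSet n` as its underlying set.) -/
def Fn (n : ℕ) : Subgroup (UnitInt ≃ₜ UnitInt) := Subgroup.closure (FnSet n)

/-!
Conjugate by a homeomorphism `ψ` of `[0,1]` that carries the `n`-adic subdivision onto a dyadic
one: at level one, `ψ` maps `[d/n, (d+1)/n]` onto `[1 - 2^{-d}, 1 - 2^{-d-1}]` (the last cell onto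
`[1 - 2^{1-n}, 1]`), and it is self-similar, so `ψ` intertwines the affine chart of each `n`-adic
cell with the affine chart of its image, a dyadic interval of length a power of `2`. An element of
`F_n` maps every sufficiently small `n`-adic cell affinely onto an `n`-adic cell, hence its
conjugate maps the image intervals, whose endpoints are dyadic, affinely with slopes powers of `2`,
i.e. lies in `F`. Conjugation being injective, it restricts to an embedding `F_n → F`.
-/

section NAdic

variable {n : ℕ} {x y : ℝ}

lemma isNAdic_intCast (n : ℕ) (z : ℤ) : IsNAdic n z := ⟨z, 0, by simp⟩

lemma isNAdic_two_inv_pow (e : ℕ) : IsNAdic 2 (2⁻¹ ^ e) := ⟨1, e, by simp⟩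

lemma IsNAdic.neg (hx : IsNAdic n x) : IsNAdic n (-x) := by
  obtain ⟨a, k, rfl⟩ := hx
  exact ⟨-a, k, by push_cast; ring⟩

lemma IsNAdic.add (hn : n ≠ 0) (hx : IsNAdic n x) (hy : IsNAdic n y) : IsNAdic n (x + y) := by
  obtain ⟨a, k, rfl⟩ := hx
  obtain ⟨b, j, rfl⟩ := hy
  refine ⟨a * n ^ j + b * n ^ k, k + j, ?_⟩
  have : (n : ℝ) ≠ 0 := Nat.cast_ne_zero.2 hn
  push_cast
  field_simp
  ring

lemma IsNAdic.sub (hn : n ≠ 0) (hx : IsNAdic n x) (hy : IsNAdic n y) : IsNAdic n (x - y) := by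
  simpa [sub_eq_add_neg] using hx.add hn hy.neg

lemma IsNAdic.mul (hx : IsNAdic n x) (hy : IsNAdic n y) : IsNAdic n (x * y) := by
  obtain ⟨a, k, rfl⟩ := hx
  obtain ⟨b, j, rfl⟩ := hy
  exact ⟨a * b, k + j, by push_cast; rw [pow_add, div_mul_div_comm]⟩

lemma isNAdic_zpow (n : ℕ) (s : ℤ) : IsNAdic n ((n : ℝ) ^ s) := by
  cases s with
  | ofNat k => exact ⟨n ^ k, 0, by simp⟩
  | negSucc k => exact ⟨1, k + 1, by simp [zpow_negSucc]⟩

lemma IsNAdic.eventually_mul_pow (hn : n ≠ 0) (hx : IsNAdic n x) :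
    ∀ᶠ K in Filter.atTop, ∃ z : ℤ, x * (n : ℝ) ^ K = z := by
  obtain ⟨a, k, rfl⟩ := hx
  refine Filter.eventually_atTop.2 ⟨k, fun K hK => ⟨a * n ^ (K - k), ?_⟩⟩
  have : (n : ℝ) ≠ 0 := Nat.cast_ne_zero.2 hn
  rw [← Nat.add_sub_cancel' hK, pow_add, Nat.add_sub_cancel_left]
  push_cast
  field_simp

end NAdic

section Grid

/-- The level-1 picture: the `n`-adic cell `[d/n, (d+1)/n]` is sent to the dyadic interval
starting at `1 - 2^{-d}` of length `2^{-(d+1)}`, except the last one (`d = n - 1`), which is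
`[1 - 2^{-(n-1)}, 1]`. -/
def digitLeft (n d : ℕ) : ℝ := 1 - 2⁻¹ ^ min d (n - 1)

def digitExp (n d : ℕ) : ℕ := min (d + 1) (n - 1)

/-- Iterating the level-1 picture (the cell `a` of level `k + 1` is the sub-cell `a % n` of the
cell `a / n` of level `k`), the image of `[a/n^k, (a+1)/n^k]` has length `2^{-cellExp n k a}` and
left end `gridImage n k a`. Only `a ≤ n^k` is meaningful. -/
def cellExp (n : ℕ) : ℕ → ℕ → ℕ
  | 0, _ => 0
  | k + 1, a => cellExp n k (a / n) + digitExp n (a % n)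

def cellLength (n k a : ℕ) : ℝ := 2⁻¹ ^ cellExp n k a

def gridImage (n : ℕ) : ℕ → ℕ → ℝ
  | 0, a => a
  | k + 1, a => gridImage n k (a / n) + cellLength n k (a / n) * digitLeft n (a % n)

variable {n : ℕ}

lemma digitLeft_zero : digitLeft n 0 = 0 := by simp [digitLeft]

lemma digitLeft_add_of_lt {d : ℕ} (hd : d + 1 < n) :
    digitLeft n d + 2⁻¹ ^ digitExp n d = digitLeft n (d + 1) := by
  rw [digitLeft, digitLeft, digitExp, min_eq_left (by omega), min_eq_left (by omega), pow_succ]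
  ring

lemma digitLeft_add_last : digitLeft n (n - 1) + 2⁻¹ ^ digitExp n (n - 1) = 1 := by
  rw [digitLeft, digitExp, min_self, min_eq_right (by omega)]
  ring

lemma cellLength_pos (k a : ℕ) : 0 < cellLength n k a := by
  unfold cellLength; positivity

lemma div_add_mod_succ_level {q r : ℕ} (hr : r < n) : (n * q + r) / n = q ∧ (n * q + r) % n = r :=
  ⟨by rw [Nat.mul_add_div (by omega), Nat.div_eq_of_lt hr, add_zero],
    by rw [Nat.mul_add_mod, Nat.mod_eq_of_lt hr]⟩

lemma cellExp_succ_level {k q r : ℕ} (hr : r < n) :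
    cellExp n (k + 1) (n * q + r) = cellExp n k q + digitExp n r := by
  rw [cellExp, (div_add_mod_succ_level hr).1, (div_add_mod_succ_level hr).2]

lemma cellLength_succ_level {k q r : ℕ} (hr : r < n) :
    cellLength n (k + 1) (n * q + r) = cellLength n k q * 2⁻¹ ^ digitExp n r := by
  rw [cellLength, cellExp_succ_level hr, pow_add, cellLength]

lemma gridImage_succ_level {k q r : ℕ} (hr : r < n) :
    gridImage n (k + 1) (n * q + r) = gridImage n k q + cellLength n k q * digitLeft n r := by
  rw [gridImage, (div_add_mod_succ_level hr).1, (div_add_mod_succ_level hr).2]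

lemma mul_pow_succ_add (a j b : ℕ) : a * n ^ (j + 1) + b = n * (a * n ^ j + b / n) + b % n := by
  have := Nat.div_add_mod b n
  rw [pow_succ]
  linarith

lemma le_cellExp (hn : 2 ≤ n) (k a : ℕ) : k ≤ cellExp n k a := by
  induction k generalizing a with
  | zero => exact le_rfl
  | succ k ih =>
    have := ih (a / n)
    have : 1 ≤ digitExp n (a % n) := le_min (by omega) (by omega)
    rw [cellExp]; omega

lemma cellLength_le (hn : 2 ≤ n) (k a : ℕ) : cellLength n k a ≤ 2⁻¹ ^ k :=
  pow_le_pow_of_le_one (by norm_num) (by norm_num) (le_cellExp hn k a)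

lemma cellExp_add (hn : 2 ≤ n) (k : ℕ) {j a b : ℕ} (hb : b < n ^ j) :
    cellExp n (k + j) (a * n ^ j + b) = cellExp n k a + cellExp n j b := by
  induction j generalizing b with
  | zero => simp_all [cellExp]
  | succ j ih =>
    have hr : b % n < n := Nat.mod_lt _ (by omega)
    rw [← add_assoc, mul_pow_succ_add, cellExp_succ_level hr,
      ih (Nat.div_lt_of_lt_mul (by rwa [← pow_succ'])), add_assoc, ← cellExp_succ_level hr,
      Nat.div_add_mod]

lemma cellLength_add (hn : 2 ≤ n) (k : ℕ) {j a b : ℕ} (hb : b < n ^ j) :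
    cellLength n (k + j) (a * n ^ j + b) = cellLength n k a * cellLength n j b := by
  rw [cellLength, cellExp_add hn k hb, pow_add, cellLength, cellLength]

lemma gridImage_mul_pow (hn : 2 ≤ n) (k j a : ℕ) :
    gridImage n (k + j) (a * n ^ j) = gridImage n k a := by
  induction j with
  | zero => simp
  | succ j ih =>
    have h := gridImage_succ_level (k := k + j) (q := a * n ^ j) (by omega : 0 < n)
    rw [add_zero, digitLeft_zero, mul_zero, add_zero, ih] at h
    rw [← add_assoc, pow_succ, ← mul_assoc, mul_comm, h]

lemma gridImage_zero (hn : 2 ≤ n) (k : ℕ) : gridImage n k 0 = 0 := by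
  simpa [gridImage] using gridImage_mul_pow hn 0 k 0

lemma gridImage_pow (hn : 2 ≤ n) (k : ℕ) : gridImage n k (n ^ k) = 1 := by
  simpa [gridImage] using gridImage_mul_pow hn 0 k 1

lemma gridImage_succ (hn : 2 ≤ n) {k a : ℕ} (ha : a < n ^ k) :
    gridImage n k (a + 1) = gridImage n k a + cellLength n k a := by
  induction k generalizing a with
  | zero => simp_all [gridImage, cellLength, cellExp]
  | succ k ih =>
    obtain ⟨q, r, hr, rfl⟩ : ∃ q r, r < n ∧ a = n * q + r :=
      ⟨a / n, a % n, Nat.mod_lt _ (by omega), (Nat.div_add_mod a n).symm⟩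
    have hq : q < n ^ k := by
      rw [pow_succ] at ha; nlinarith
    rw [gridImage_succ_level hr, cellLength_succ_level hr]
    rcases Nat.lt_or_ge (r + 1) n with hr1 | hr1
    · rw [add_assoc, gridImage_succ_level hr1, ← digitLeft_add_of_lt hr1]
      ring
    · have hr' : r = n - 1 := by omega
      have hsucc : n * q + r + 1 = (q + 1) * n ^ 1 := by
        rw [pow_one, add_mul, one_mul, mul_comm q n]; omega
      rw [hsucc, gridImage_mul_pow hn k 1, ih hq, hr']
      linear_combination (-cellLength n k q) * digitLeft_add_last (n := n)

lemma gridImage_strictMonoOn (hn : 2 ≤ n) (k : ℕ) :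
    StrictMonoOn (gridImage n k) (Set.Iic (n ^ k)) :=
  strictMonoOn_Iic_of_lt_succ fun a ha => by
    rw [Order.succ_eq_add_one, gridImage_succ hn ha]
    linarith [cellLength_pos (n := n) k a]

lemma gridImage_succ_le (hn : 2 ≤ n) {k a : ℕ} (ha : a < n ^ k) :
    gridImage n k (a + 1) ≤ gridImage n k a + 2⁻¹ ^ k := by
  rw [gridImage_succ hn ha]
  linarith [cellLength_le hn k a]

lemma gridImage_mem_Icc (hn : 2 ≤ n) {k a : ℕ} (ha : a ≤ n ^ k) :
    gridImage n k a ∈ Set.Icc (0 : ℝ) 1 := by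
  have hmono := (gridImage_strictMonoOn hn k).monotoneOn
  constructor
  · simpa [gridImage_zero hn] using hmono (Set.mem_Iic.2 (Nat.zero_le _)) ha (Nat.zero_le a)
  · simpa [gridImage_pow hn] using hmono ha (Set.mem_Iic.2 le_rfl) ha

lemma gridImage_add (hn : 2 ≤ n) {k j a b : ℕ} (ha : a < n ^ k) (hb : b ≤ n ^ j) :
    gridImage n (k + j) (a * n ^ j + b) = gridImage n k a + cellLength n k a * gridImage n j b := by
  induction j generalizing b with
  | zero =>
    rcases Nat.le_one_iff_eq_zero_or_eq_one.1 (by simpa using hb) with rfl | rfl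
    · simp [gridImage]
    · simp [gridImage, gridImage_succ hn ha]
  | succ j ih =>
    have hr : b % n < n := Nat.mod_lt _ (by omega)
    have hq : b / n ≤ n ^ j := Nat.div_le_of_le_mul (by rwa [← pow_succ'])
    rw [← add_assoc, mul_pow_succ_add, gridImage_succ_level hr, ih hq]
    conv_rhs => rw [← Nat.div_add_mod b n, gridImage_succ_level hr]
    rcases hq.lt_or_eq with hq | hq
    · rw [cellLength_add hn k hq]
      ring
    · have : b % n = 0 := by
        have := Nat.div_add_mod b n; rw [hq, ← pow_succ'] at this; omega
      rw [this, digitLeft_zero]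
      ring

lemma isNAdic_two_gridImage (k a : ℕ) : IsNAdic 2 (gridImage n k a) := by
  induction k generalizing a with
  | zero => exact isNAdic_intCast 2 a
  | succ k ih =>
    have hdigit : IsNAdic 2 (digitLeft n (a % n)) := by
      simpa [digitLeft] using (isNAdic_intCast 2 1).sub two_ne_zero (isNAdic_two_inv_pow _)
    exact (ih _).add two_ne_zero ((isNAdic_two_inv_pow _).mul hdigit)

end Grid

section Psi

open Filter Topology

variable {n : ℕ} {x : ℝ}

def gridApprox (n : ℕ) (x : ℝ) (k : ℕ) : ℝ := gridImage n k ⌊x * (n : ℝ) ^ k⌋₊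

/-- The conjugating map `ψ`, as the limit of its values `gridImage` on the `n`-adic grid. -/
def psi (n : ℕ) (x : ℝ) : ℝ := ⨆ k, gridApprox n x k

lemma floor_mul_pow_le (hx : x ∈ Set.Icc (0 : ℝ) 1) (k : ℕ) : ⌊x * (n : ℝ) ^ k⌋₊ ≤ n ^ k :=
  Nat.floor_le_of_le <| by
    push_cast; exact mul_le_of_le_one_left (by positivity) hx.2

lemma gridApprox_mem_Icc (hn : 2 ≤ n) (hx : x ∈ Set.Icc (0 : ℝ) 1) (k : ℕ) :
    gridApprox n x k ∈ Set.Icc (0 : ℝ) 1 :=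
  gridImage_mem_Icc hn (floor_mul_pow_le hx k)

lemma gridApprox_mono (hn : 2 ≤ n) (hx : x ∈ Set.Icc (0 : ℝ) 1) : Monotone (gridApprox n x) := by
  refine monotone_nat_of_le_succ fun k => ?_
  have hle : ⌊x * (n : ℝ) ^ k⌋₊ * n ^ 1 ≤ ⌊x * (n : ℝ) ^ (k + 1)⌋₊ := Nat.le_floor <| by
    rw [pow_one]
    push_cast
    rw [pow_succ, ← mul_assoc]
    gcongr
    exact Nat.floor_le (by have := hx.1; positivity)
  rw [gridApprox, gridApprox, ← gridImage_mul_pow hn k 1]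
  exact (gridImage_strictMonoOn hn _).monotoneOn
    (le_trans hle (floor_mul_pow_le hx _)) (floor_mul_pow_le hx _) hle

lemma gridApprox_le_add (hn : 2 ≤ n) (hx : x ∈ Set.Icc (0 : ℝ) 1) (k i : ℕ) :
    gridApprox n x (k + i) ≤ gridApprox n x k + 2⁻¹ ^ k := by
  set a := ⌊x * (n : ℝ) ^ k⌋₊
  rcases (floor_mul_pow_le hx k).lt_or_eq with ha | ha
  · have hle : ⌊x * (n : ℝ) ^ (k + i)⌋₊ ≤ (a + 1) * n ^ i := Nat.floor_le_of_le <| by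
      push_cast
      rw [pow_add, ← mul_assoc]
      gcongr
      exact (Nat.lt_floor_add_one _).le
    have hbound : (a + 1) * n ^ i ≤ n ^ (k + i) := by
      rw [pow_add]; exact Nat.mul_le_mul_right _ ha
    calc gridApprox n x (k + i) ≤ gridImage n (k + i) ((a + 1) * n ^ i) :=
          (gridImage_strictMonoOn hn _).monotoneOn (floor_mul_pow_le hx _) hbound hle
      _ = gridImage n k (a + 1) := gridImage_mul_pow hn k i (a + 1)
      _ ≤ gridApprox n x k + 2⁻¹ ^ k := gridImage_succ_le hn ha
  · have h1 : gridApprox n x k = 1 := by rw [gridApprox, ha, gridImage_pow hn]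
    rw [h1]
    linarith [(gridApprox_mem_Icc hn hx (k + i)).2, pow_nonneg (by norm_num : (0 : ℝ) ≤ 2⁻¹) k]

lemma bddAbove_range_gridApprox (hn : 2 ≤ n) (hx : x ∈ Set.Icc (0 : ℝ) 1) :
    BddAbove (Set.range (gridApprox n x)) :=
  ⟨1, by rintro _ ⟨k, rfl⟩; exact (gridApprox_mem_Icc hn hx k).2⟩

lemma tendsto_gridApprox (hn : 2 ≤ n) (hx : x ∈ Set.Icc (0 : ℝ) 1) :
    Tendsto (gridApprox n x) atTop (𝓝 (psi n x)) :=
  tendsto_atTop_ciSup (gridApprox_mono hn hx) (bddAbove_range_gridApprox hn hx)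

lemma gridApprox_le_psi (hn : 2 ≤ n) (hx : x ∈ Set.Icc (0 : ℝ) 1) (k : ℕ) :
    gridApprox n x k ≤ psi n x :=
  le_ciSup (bddAbove_range_gridApprox hn hx) k

lemma psi_le_gridApprox_add (hn : 2 ≤ n) (hx : x ∈ Set.Icc (0 : ℝ) 1) (k : ℕ) :
    psi n x ≤ gridApprox n x k + 2⁻¹ ^ k :=
  ciSup_le fun j => calc
    gridApprox n x j ≤ gridApprox n x (k + j) := gridApprox_mono hn hx (Nat.le_add_left j k)
    _ ≤ gridApprox n x k + 2⁻¹ ^ k := gridApprox_le_add hn hx k j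

lemma psi_mem_Icc (hn : 2 ≤ n) (hx : x ∈ Set.Icc (0 : ℝ) 1) : psi n x ∈ Set.Icc (0 : ℝ) 1 :=
  ⟨(gridApprox_mem_Icc hn hx 0).1.trans (gridApprox_le_psi hn hx 0),
    ciSup_le fun k => (gridApprox_mem_Icc hn hx k).2⟩

lemma div_mem_Icc_zero_one {N y : ℝ} (hN : 0 < N) (hy : y ∈ Set.Icc 0 N) :
    y / N ∈ Set.Icc (0 : ℝ) 1 :=
  ⟨div_nonneg hy.1 hN.le, (div_le_one hN).2 hy.2⟩

lemma natCast_div_pow_mem_Icc (hn : 2 ≤ n) {k b : ℕ} (hb : b ≤ n ^ k) :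
    (b : ℝ) / (n : ℝ) ^ k ∈ Set.Icc (0 : ℝ) 1 :=
  div_mem_Icc_zero_one (by positivity) ⟨by positivity, by exact_mod_cast hb⟩

lemma psi_grid (hn : 2 ≤ n) {k a : ℕ} (ha : a ≤ n ^ k) :
    psi n ((a : ℝ) / (n : ℝ) ^ k) = gridImage n k a := by
  have hmem := natCast_div_pow_mem_Icc hn ha
  have hconst : ∀ i, gridApprox n ((a : ℝ) / (n : ℝ) ^ k) (i + k) = gridImage n k a := fun i => by
    have : (a : ℝ) / (n : ℝ) ^ k * (n : ℝ) ^ (i + k) = ((a * n ^ i : ℕ) : ℝ) := by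
      have : (n : ℝ) ^ k ≠ 0 := by positivity
      push_cast; field_simp; ring
    rw [gridApprox, this, Nat.floor_natCast, add_comm, gridImage_mul_pow hn]
  have h := (tendsto_add_atTop_iff_nat k).2 (tendsto_gridApprox hn hmem)
  simp only [hconst] at h
  exact tendsto_nhds_unique h tendsto_const_nhds

lemma psi_cell (hn : 2 ≤ n) {k a : ℕ} (ha : a < n ^ k) {u : ℝ} (hu : u ∈ Set.Icc (0 : ℝ) 1) :
    psi n (((a : ℝ) + u) / (n : ℝ) ^ k) = gridImage n k a + cellLength n k a * psi n u := by
  have hmem : ((a : ℝ) + u) / (n : ℝ) ^ k ∈ Set.Icc (0 : ℝ) 1 := by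
    have : ((a + 1 : ℕ) : ℝ) ≤ (n : ℝ) ^ k := by exact_mod_cast ha
    refine div_mem_Icc_zero_one (by positivity) ⟨by positivity [hu.1], ?_⟩
    push_cast at this; linarith [hu.2]
  have hshift : ∀ i, gridApprox n (((a : ℝ) + u) / (n : ℝ) ^ k) (i + k) =
      gridImage n k a + cellLength n k a * gridApprox n u i := fun i => by
    have : ((a : ℝ) + u) / (n : ℝ) ^ k * (n : ℝ) ^ (i + k) =
        u * (n : ℝ) ^ i + ((a * n ^ i : ℕ) : ℝ) := by
      have : (n : ℝ) ^ k ≠ 0 := by positivity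
      push_cast; field_simp; ring
    rw [gridApprox, this, Nat.floor_add_natCast (by have := hu.1; positivity), add_comm i,
      add_comm _ (a * n ^ i), gridImage_add hn ha (floor_mul_pow_le hu i), gridApprox]
  have h := (tendsto_add_atTop_iff_nat k).2 (tendsto_gridApprox hn hmem)
  simp only [hshift] at h
  exact tendsto_nhds_unique h (((tendsto_gridApprox hn hu).const_mul _).const_add _)

lemma psi_monotoneOn (hn : 2 ≤ n) : MonotoneOn (psi n) (Set.Icc 0 1) := fun x hx y hy hxy =>
  ciSup_mono (bddAbove_range_gridApprox hn hy) fun k =>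
    (gridImage_strictMonoOn hn k).monotoneOn (floor_mul_pow_le hx k) (floor_mul_pow_le hy k)
      (Nat.floor_le_floor (by gcongr))

lemma psi_strictMonoOn (hn : 2 ≤ n) : StrictMonoOn (psi n) (Set.Icc 0 1) := by
  intro x hx y hy hxy
  have hN : (1 : ℝ) < n := by exact_mod_cast (by omega : 1 < n)
  obtain ⟨k, hk⟩ := pow_unbounded_of_one_lt (2 / (y - x)) hN
  have hNk : (0 : ℝ) < (n : ℝ) ^ k := by positivity
  have hk' : 2 < (y - x) * (n : ℝ) ^ k := by
    rw [div_lt_iff₀ (by linarith)] at hk; linarith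
  set a := ⌊x * (n : ℝ) ^ k⌋₊
  have hfl := Nat.lt_floor_add_one (x * (n : ℝ) ^ k)
  have hfl' : (a : ℝ) ≤ x * (n : ℝ) ^ k := Nat.floor_le (by have := hx.1; positivity)
  have hyn : y * (n : ℝ) ^ k ≤ (n : ℝ) ^ k := mul_le_of_le_one_left hNk.le hy.2
  have ha2 : a + 2 ≤ n ^ k := by
    have : (a : ℝ) + 2 ≤ (n : ℝ) ^ k := by nlinarith
    exact_mod_cast this
  have hx1 : x ≤ ((a + 1 : ℕ) : ℝ) / (n : ℝ) ^ k := by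
    rw [le_div_iff₀ hNk]; push_cast; linarith
  have hy2 : ((a + 2 : ℕ) : ℝ) / (n : ℝ) ^ k ≤ y := by
    rw [div_le_iff₀ hNk]; push_cast; nlinarith
  calc psi n x ≤ psi n (((a + 1 : ℕ) : ℝ) / (n : ℝ) ^ k) :=
        psi_monotoneOn hn hx (natCast_div_pow_mem_Icc hn (by omega)) hx1
    _ = gridImage n k (a + 1) := psi_grid hn (by omega)
    _ < gridImage n k (a + 2) :=
        gridImage_strictMonoOn hn k (Set.mem_Iic.2 (by omega)) (Set.mem_Iic.2 ha2) (by omega)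
    _ = psi n (((a + 2 : ℕ) : ℝ) / (n : ℝ) ^ k) := (psi_grid hn ha2).symm
    _ ≤ psi n y := psi_monotoneOn hn (natCast_div_pow_mem_Icc hn ha2) hy hy2

lemma psi_le_add_of_le (hn : 2 ≤ n) {x y : ℝ} (hx : x ∈ Set.Icc (0 : ℝ) 1)
    (hy : y ∈ Set.Icc (0 : ℝ) 1) (k : ℕ) (hxy : x ≤ y) (hyx : y ≤ x + 1 / (n : ℝ) ^ k) :
    psi n y ≤ psi n x + 2 * 2⁻¹ ^ k := by
  have hNk : (0 : ℝ) < (n : ℝ) ^ k := by positivity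
  set a := ⌊x * (n : ℝ) ^ k⌋₊
  have hb : ⌊y * (n : ℝ) ^ k⌋₊ < a + 2 := (Nat.floor_lt (by have := hy.1; positivity)).2 <| by
    have : y * (n : ℝ) ^ k ≤ x * (n : ℝ) ^ k + 1 := by
      have := mul_le_mul_of_nonneg_right hyx hNk.le
      rwa [add_mul, one_div, inv_mul_cancel₀ hNk.ne'] at this
    push_cast; linarith [Nat.lt_floor_add_one (x * (n : ℝ) ^ k)]
  have hstep : gridApprox n y k ≤ gridApprox n x k + 2⁻¹ ^ k := by
    have hab : a ≤ ⌊y * (n : ℝ) ^ k⌋₊ := Nat.floor_le_floor (by gcongr)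
    rcases (show ⌊y * (n : ℝ) ^ k⌋₊ = a ∨ ⌊y * (n : ℝ) ^ k⌋₊ = a + 1 by omega) with h | h
    · rw [gridApprox, h, gridApprox]
      linarith [pow_nonneg (by norm_num : (0 : ℝ) ≤ 2⁻¹) k]
    · rw [gridApprox, h, gridApprox]
      exact gridImage_succ_le hn (by have := floor_mul_pow_le (n := n) hy k; omega)
  linarith [psi_le_gridApprox_add hn hy k, gridApprox_le_psi hn hx k]

lemma psi_continuousOn (hn : 2 ≤ n) : ContinuousOn (psi n) (Set.Icc 0 1) := by
  refine Metric.continuousOn_iff.2 fun x hx ε hε => ?_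
  obtain ⟨k, hk⟩ := exists_pow_lt_of_lt_one (half_pos hε) (by norm_num : (2 : ℝ)⁻¹ < 1)
  refine ⟨1 / (n : ℝ) ^ k, by positivity, fun y hy hxy => ?_⟩
  rw [Real.dist_eq, abs_lt] at hxy ⊢
  have hmx := psi_monotoneOn hn
  rcases le_total x y with h | h
  · have := psi_le_add_of_le hn hx hy k h (by linarith)
    have := hmx hx hy h
    constructor <;> linarith
  · have := psi_le_add_of_le hn hy hx k h (by linarith)
    have := hmx hy hx h
    constructor <;> linarith

end Psi

section Homeo

variable {n : ℕ}

lemma psi_zero (hn : 2 ≤ n) : psi n 0 = 0 := by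
  simpa [gridImage_zero hn] using psi_grid hn (k := 0) (a := 0) (by simp)

lemma psi_one (hn : 2 ≤ n) : psi n 1 = 1 := by
  simpa [gridImage] using psi_grid hn (k := 0) (a := 1) (by simp)

def psiIcc (n : ℕ) (hn : 2 ≤ n) (x : UnitInt) : UnitInt := ⟨psi n x, psi_mem_Icc hn x.2⟩

lemma psiIcc_strictMono (hn : 2 ≤ n) : StrictMono (psiIcc n hn) := fun x y hxy =>
  Subtype.mk_lt_mk.2 (psi_strictMonoOn hn x.2 y.2 hxy)

lemma psiIcc_surjective (hn : 2 ≤ n) : Function.Surjective (psiIcc n hn) := by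
  intro y
  have himg := intermediate_value_Icc zero_le_one (psi_continuousOn hn)
  rw [psi_zero hn, psi_one hn] at himg
  obtain ⟨x, hx, hxy⟩ := himg y.2
  exact ⟨⟨x, hx⟩, Subtype.ext hxy⟩

def psiOrderIso (n : ℕ) (hn : 2 ≤ n) : UnitInt ≃o UnitInt :=
  StrictMono.orderIsoOfSurjective _ (psiIcc_strictMono hn) (psiIcc_surjective hn)

def psiHomeo (n : ℕ) (hn : 2 ≤ n) : UnitInt ≃ₜ UnitInt := (psiOrderIso n hn).toHomeomorph

end Homeo

section Conjugation

variable {n : ℕ}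

def MapsCellsAffinely (n : ℕ) (F : ℝ → ℝ) (K : ℕ) : Prop :=
  ∀ j < n ^ K, ∃ K' a : ℕ, a < n ^ K' ∧
    ∀ u ∈ Set.Icc (0 : ℝ) 1, F ((j + u) / (n : ℝ) ^ K) = (a + u) / (n : ℝ) ^ K'

lemma psi_cell_eq_zpow_mul_add (hn : 2 ≤ n) {K j K' a : ℕ} (hj : j < n ^ K) (ha : a < n ^ K')
    {u : ℝ} (hu : u ∈ Set.Icc (0 : ℝ) 1) :
    psi n ((a + u) / (n : ℝ) ^ K') =
      (2 : ℝ) ^ ((cellExp n K j : ℤ) - cellExp n K' a) * psi n ((j + u) / (n : ℝ) ^ K) +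
        (gridImage n K' a -
          (2 : ℝ) ^ ((cellExp n K j : ℤ) - cellExp n K' a) * gridImage n K j) := by
  have hlen : cellLength n K' a =
      (2 : ℝ) ^ ((cellExp n K j : ℤ) - cellExp n K' a) * cellLength n K j := by
    rw [cellLength, cellLength, zpow_sub₀ two_ne_zero, zpow_natCast, zpow_natCast, inv_pow,
      inv_pow]
    field_simp
  rw [psi_cell hn ha hu, psi_cell hn hj hu, hlen]
  ring

lemma exists_eq_cell_of_psi_mem_Icc (hn : 2 ≤ n) {K j : ℕ} (hj : j < n ^ K) {x : ℝ}
    (hx : x ∈ Set.Icc (0 : ℝ) 1)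
    (hpsi : psi n x ∈ Set.Icc (gridImage n K j) (gridImage n K (j + 1))) :
    ∃ u ∈ Set.Icc (0 : ℝ) 1, x = (j + u) / (n : ℝ) ^ K := by
  have hNK : (0 : ℝ) < (n : ℝ) ^ K := by positivity
  have hlo : (j : ℝ) / (n : ℝ) ^ K ≤ x := by
    rw [← (psi_strictMonoOn hn).le_iff_le (natCast_div_pow_mem_Icc hn hj.le) hx,
      psi_grid hn hj.le]
    exact hpsi.1
  have hhi : x ≤ ((j + 1 : ℕ) : ℝ) / (n : ℝ) ^ K := by
    rw [← (psi_strictMonoOn hn).le_iff_le hx (natCast_div_pow_mem_Icc hn hj), psi_grid hn hj]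
    exact hpsi.2
  rw [div_le_iff₀ hNK] at hlo
  rw [le_div_iff₀ hNK] at hhi
  push_cast at hhi
  exact ⟨x * (n : ℝ) ^ K - j, ⟨by linarith, by linarith⟩, by field_simp; ring⟩

lemma inF_two_psiHomeo_conj (hn : 2 ≤ n) {f : UnitInt ≃ₜ UnitInt} (hf : StrictMono f) {K : ℕ}
    (hK : MapsCellsAffinely n (Set.IccExtend zero_le_one fun x => (f x : ℝ)) K) :
    InF 2 (psiHomeo n hn * f * (psiHomeo n hn)⁻¹) := by
  choose! K' a ha hcell using hK
  refine ⟨(psiOrderIso n hn).strictMono.comp (hf.comp (psiOrderIso n hn).symm.strictMono),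
    n ^ K, gridImage n K, fun j => (cellExp n K j : ℤ) - cellExp n (K' j) (a j),
    fun j => gridImage n (K' j) (a j) -
      (2 : ℝ) ^ ((cellExp n K j : ℤ) - cellExp n (K' j) (a j)) * gridImage n K j,
    by positivity, gridImage_zero hn K, gridImage_pow hn K,
    fun j hj => gridImage_strictMonoOn hn K (Set.mem_Iic.2 hj.le) (Set.mem_Iic.2 hj) (by omega),
    fun j _ => isNAdic_two_gridImage K j, fun j hj y hy => ?_⟩
  set x := (psiHomeo n hn).symm y
  have hpsix : psi n x = y := congrArg Subtype.val ((psiHomeo n hn).apply_symm_apply y)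
  obtain ⟨u, hu, hxu⟩ := exists_eq_cell_of_psi_mem_Icc hn hj x.2 (hpsix ▸ hy)
  have hfx : (f x : ℝ) = (a j + u) / (n : ℝ) ^ K' j := by
    rw [← hcell j hj u hu, ← hxu, Set.IccExtend_of_mem _ _ x.2]
  change psi n (f x) = _
  rw [hfx, psi_cell_eq_zpow_mul_add hn hj (ha j hj) hu, ← hxu, hpsix]
  push_cast
  ring

end Conjugation

section Cells

variable {n : ℕ}

lemma exists_piece_of_forall_le_or_ge {t : ℕ → ℝ} {u v : ℝ} (huv : u < v) (h0 : t 0 ≤ u) :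
    ∀ {m : ℕ}, v ≤ t m → (∀ i ≤ m, t i ≤ u ∨ v ≤ t i) → ∃ i < m, t i ≤ u ∧ v ≤ t (i + 1)
  | 0, hm, _ => absurd (h0.trans_lt huv) (not_lt.2 hm)
  | m + 1, hm, hsep => by
    rcases hsep m (by omega) with h | h
    · exact ⟨m, by omega, h, hm⟩
    · obtain ⟨i, hi, hiu, hiv⟩ :=
        exists_piece_of_forall_le_or_ge huv h0 h fun i hi => hsep i (by omega)
      exact ⟨i, by omega, hiu, hiv⟩

lemma le_or_ge_of_mul_eq_intCast {N y : ℝ} (hN : 0 < N) {z : ℤ} (hz : y * N = z) (j : ℕ) :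
    y ≤ j / N ∨ (j + 1) / N ≤ y := by
  rw [le_div_iff₀ hN, div_le_iff₀ hN, hz]
  rcases le_or_gt z j with h | h
  · exact Or.inl (by exact_mod_cast h)
  · exact Or.inr (by exact_mod_cast (show (j : ℤ) + 1 ≤ z by omega))

lemma isNAdic_offset {F : ℝ → ℝ} {m : ℕ} {t : ℕ → ℝ} {s : ℕ → ℤ} {c : ℕ → ℝ} (hn : n ≠ 0)
    (hF0 : F 0 = 0) (ht0 : t 0 = 0) (hinc : ∀ i < m, t i < t (i + 1))
    (hadic : ∀ i ≤ m, IsNAdic n (t i))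
    (hF : ∀ i < m, ∀ x ∈ Set.Icc (t i) (t (i + 1)), F x = (n : ℝ) ^ s i * x + c i) :
    ∀ i < m, IsNAdic n (c i) := by
  intro i hi
  induction i with
  | zero =>
    have h := hF 0 hi 0 ⟨ht0.le, ht0 ▸ (hinc 0 hi).le⟩
    rw [hF0, mul_zero, zero_add] at h
    simpa [← h] using isNAdic_intCast n 0
  | succ i ih =>
    have h1 := hF i (by omega) (t (i + 1)) ⟨(hinc i (by omega)).le, le_rfl⟩
    have h2 := hF (i + 1) hi (t (i + 1)) ⟨le_rfl, (hinc (i + 1) hi).le⟩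
    have hc : c (i + 1) = c i + (n : ℝ) ^ s i * t (i + 1) - (n : ℝ) ^ s (i + 1) * t (i + 1) := by
      linarith
    have ht := hadic (i + 1) hi.le
    rw [hc]
    exact ((ih (by omega)).add hn ((isNAdic_zpow n _).mul ht)).sub hn ((isNAdic_zpow n _).mul ht)

lemma exists_cell_image_of_eq_zpow_mul_add {F : ℝ → ℝ} (hn : 2 ≤ n) {K j : ℕ} {s : ℤ} {c : ℝ}
    {e : ℤ} (hs : s ≤ K) (he : c * (n : ℝ) ^ (K - s).toNat = e)
    (hF : ∀ u ∈ Set.Icc (0 : ℝ) 1,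
      F ((j + u) / (n : ℝ) ^ K) = (n : ℝ) ^ s * ((j + u) / (n : ℝ) ^ K) + c)
    (h0 : 0 ≤ F (j / (n : ℝ) ^ K)) (h1 : F ((j + 1) / (n : ℝ) ^ K) ≤ 1) :
    ∃ K' a : ℕ, a < n ^ K' ∧
      ∀ u ∈ Set.Icc (0 : ℝ) 1, F ((j + u) / (n : ℝ) ^ K) = (a + u) / (n : ℝ) ^ K' := by
  set K' := (K - s).toNat
  have hN : (n : ℝ) ≠ 0 := by positivity
  have hNK' : (0 : ℝ) < (n : ℝ) ^ K' := by positivity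
  have hform : ∀ u ∈ Set.Icc (0 : ℝ) 1,
      F ((j + u) / (n : ℝ) ^ K) = ((j + e : ℤ) + u) / (n : ℝ) ^ K' := fun u hu => by
    have hpow : (n : ℝ) ^ s * (n : ℝ) ^ K' = (n : ℝ) ^ K := by
      rw [← zpow_natCast, ← zpow_natCast, ← zpow_add₀ hN]
      congr 1; omega
    rw [hF u hu, eq_div_iff hNK'.ne', add_mul, he, mul_comm, ← mul_assoc, mul_comm _ ((n : ℝ) ^ s),
      hpow]
    push_cast
    field_simp
    ring
  have hz0 : 0 ≤ (j : ℤ) + e := by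
    have := hform 0 ⟨le_rfl, zero_le_one⟩
    rw [add_zero, add_zero] at this
    rw [this] at h0
    exact_mod_cast (div_nonneg_iff.1 h0).elim (·.1) fun h => absurd h.2 (not_le.2 hNK')
  have hz1 : (j : ℤ) + e + 1 ≤ ((n ^ K' : ℕ) : ℤ) := by
    have := hform 1 ⟨zero_le_one, le_rfl⟩
    rw [this, div_le_one hNK'] at h1
    exact_mod_cast h1
  refine ⟨K', ((j : ℤ) + e).toNat, by omega, fun u hu => ?_⟩
  rw [hform u hu, ← Int.toNat_of_nonneg hz0]
  push_cast
  rfl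

end Cells

section Main

open Filter

variable {n : ℕ}

lemma coe_apply_zero_of_strictMono {f : UnitInt ≃ₜ UnitInt} (hf : StrictMono f) :
    (f ⟨0, Set.left_mem_Icc.2 zero_le_one⟩ : ℝ) = 0 := by
  obtain ⟨z, hz⟩ := f.surjective ⟨0, Set.left_mem_Icc.2 zero_le_one⟩
  have h := hf.monotone (show ⟨0, Set.left_mem_Icc.2 zero_le_one⟩ ≤ z from z.2.1)
  rw [hz] at h
  exact le_antisymm h (f _).2.1

lemma exists_mapsCellsAffinely_of_piecewise {F : ℝ → ℝ} (hn : 2 ≤ n)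
    (hFmem : ∀ x, F x ∈ Set.Icc (0 : ℝ) 1) (hF0 : F 0 = 0) {m : ℕ} {t : ℕ → ℝ} {s : ℕ → ℤ}
    {c : ℕ → ℝ} (ht0 : t 0 = 0) (htm : t m = 1) (hinc : ∀ i < m, t i < t (i + 1))
    (hadic : ∀ i ≤ m, IsNAdic n (t i))
    (hF : ∀ i < m, ∀ x ∈ Set.Icc (t i) (t (i + 1)), F x = (n : ℝ) ^ s i * x + c i) :
    ∃ K, MapsCellsAffinely n F K := by
  have hn0 : n ≠ 0 := by omega
  have hc := isNAdic_offset hn0 hF0 ht0 hinc hadic hF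
  have hev : ∀ᶠ K : ℕ in atTop, (∀ i ∈ Set.Iic m, ∃ z : ℤ, t i * (n : ℝ) ^ K = z) ∧
      ∀ i ∈ Set.Iio m, s i ≤ K ∧ ∃ e : ℤ, c i * (n : ℝ) ^ ((K : ℤ) - s i).toNat = e := by
    refine ((eventually_all_finite (Set.finite_Iic m)).2 fun i hi =>
      (hadic i hi).eventually_mul_pow hn0).and
      ((eventually_all_finite (Set.finite_Iio m)).2 fun i hi => ?_)
    obtain ⟨k₀, hk₀⟩ := eventually_atTop.1 ((hc i hi).eventually_mul_pow hn0)
    exact eventually_atTop.2 ⟨k₀ + (s i).toNat, fun K hK => ⟨by omega, hk₀ _ (by omega)⟩⟩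
  obtain ⟨K, htK, hcK⟩ := hev.exists
  refine ⟨K, fun j hj => ?_⟩
  have hNK : (0 : ℝ) < (n : ℝ) ^ K := by positivity
  have hjK : (j : ℝ) + 1 ≤ (n : ℝ) ^ K := by exact_mod_cast hj
  obtain ⟨i, hi, hti, hti1⟩ := exists_piece_of_forall_le_or_ge
    (div_lt_div_of_pos_right (lt_add_one (j : ℝ)) hNK) (by rw [ht0]; positivity)
    (by rwa [htm, div_le_one hNK])
    fun i hi => (htK i hi).elim fun z hz => le_or_ge_of_mul_eq_intCast hNK hz j
  obtain ⟨hs, e, he⟩ := hcK i hi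
  refine exists_cell_image_of_eq_zpow_mul_add hn hs he (fun u hu => hF i hi _ ⟨?_, ?_⟩)
    (hFmem _).1 (hFmem _).2
  · exact hti.trans (div_le_div_of_nonneg_right (by linarith [hu.1]) hNK.le)
  · exact (div_le_div_of_nonneg_right (by linarith [hu.2]) hNK.le).trans hti1

lemma InF.exists_mapsCellsAffinely (hn : 2 ≤ n) {f : UnitInt ≃ₜ UnitInt} (hf : InF n f) :
    ∃ K, MapsCellsAffinely n (Set.IccExtend zero_le_one fun x => (f x : ℝ)) K := by
  obtain ⟨hmono, m, t, s, c, -, ht0, htm, hinc, hadic, haff⟩ := hf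
  have htmono : MonotoneOn t (Set.Iic m) := (strictMonoOn_Iic_of_lt_succ hinc).monotoneOn
  have htmem : ∀ i ≤ m, t i ∈ Set.Icc (0 : ℝ) 1 := fun i hi =>
    ⟨ht0 ▸ htmono (Set.mem_Iic.2 (Nat.zero_le m)) hi (Nat.zero_le i),
      htm ▸ htmono hi (Set.mem_Iic.2 le_rfl) hi⟩
  refine exists_mapsCellsAffinely_of_piecewise hn (fun x => (f _).2) ?_ (s := s) (c := c) ht0 htm
    hinc hadic fun i hi x hx => ?_
  · rw [Set.IccExtend_left]
    exact coe_apply_zero_of_strictMono hmono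
  · have hx01 : x ∈ Set.Icc (0 : ℝ) 1 :=
      ⟨(htmem i hi.le).1.trans hx.1, hx.2.trans (htmem (i + 1) hi).2⟩
    rw [Set.IccExtend_of_mem _ _ hx01]
    exact haff i hi ⟨x, hx01⟩ hx

lemma conj_psiHomeo_mem_FnSet (hn : 2 ≤ n) {f : UnitInt ≃ₜ UnitInt} (hf : f ∈ FnSet n) :
    psiHomeo n hn * f * (psiHomeo n hn)⁻¹ ∈ FnSet 2 := by
  obtain ⟨K, hK⟩ := InF.exists_mapsCellsAffinely hn hf
  exact inF_two_psiHomeo_conj hn hf.1 hK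

end Main

/-- For every integer `n ≥ 2` there exists an injective group
homomorphism from Thompson's group `F_n` into Thompson's group `F_2 = F`. -/
theorem exists_injective_hom_Fn_to_F2 (n : ℕ) (hn : 2 ≤ n) :
    ∃ φ : Fn n →* Fn 2, Function.Injective φ := by
  let e := MulAut.conj (psiHomeo n hn)
  have hle : (Fn n).map e.toMonoidHom ≤ Fn 2 := by
    rw [Fn, MonoidHom.map_closure]
    exact Subgroup.closure_mono (Set.image_subset_iff.2 fun f hf =>
      conj_psiHomeo_mem_FnSet hn hf)
  exact ⟨(Subgroup.inclusion hle).comp (e.subgroupMap (Fn n)).toMonoidHom,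
    (Subgroup.inclusion_injective hle).comp (e.subgroupMap (Fn n)).injective⟩

end ThompsonPaper
end
end

section
/- Let n ≥ 2 and k ≥ 0. The element c_k ∈ T_n has order exactly (k+1)(n−1)+1. In particular, T_n contains torsion elements of arbitrarily large order. -/
noncomputable section

namespace ThompsonPaper

/-- The circle `ℝ/ℤ`. -/
abbrev Circle : Type := AddCircle (1 : ℝ)

/-- The set of `n`-adic points of the circle. -/
def nAdicPoints (n : ℕ) : Set Circle := { p | ∃ x : ℝ, IsNAdic n x ∧ p = (x : Circle) }

/-- `F : ℝ → ℝ` is a lift of the circle map `f`. -/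
def IsLift (f : Circle ≃ₜ Circle) (F : ℝ → ℝ) : Prop :=
  ∀ x : ℝ, f (x : Circle) = ((F x : ℝ) : Circle)

/-- `F : ℝ → ℝ` commutes with translation by `1` and is piecewise affine with finitely
many breakpoints (modulo `1`), all breakpoints at `n`-adic rationals, and with the slope
of every affine piece an integer power of `n`. -/
def PiecewiseNAffine (n : ℕ) (F : ℝ → ℝ) : Prop :=
  (∀ x : ℝ, F (x + 1) = F x + 1) ∧
  ∃ m : ℕ, ∃ t : ℕ → ℝ, ∃ slope : ℕ → ℤ, ∃ c : ℕ → ℝ,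
    0 < m ∧ t 0 = 0 ∧ t m = 1 ∧
    (∀ i, i < m → t i < t (i + 1)) ∧
    (∀ i, i ≤ m → IsNAdic n (t i)) ∧
    (∀ i, i < m → ∀ x ∈ Set.Icc (t i) (t (i + 1)),
      F x = (n : ℝ) ^ (slope i) * x + c i)

/-- Membership in Thompson's group `T_n`: an orientation-preserving homeomorphism of the
circle `ℝ/ℤ` mapping the set of `n`-adic points onto itself, which is piecewise affine
with finitely many breakpoints, all breakpoints at `n`-adic points, and all slopes integer
powers of `n`.  (Orientation preservation and the piecewise affine structure are expressed
through a strictly increasing lift.) -/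
def InT (n : ℕ) (f : Circle ≃ₜ Circle) : Prop :=
  f '' nAdicPoints n = nAdicPoints n ∧
  ∃ F : ℝ → ℝ, StrictMono F ∧ IsLift f F ∧ PiecewiseNAffine n F

/-- Thompson's group `T_n`, as a set of circle homeomorphisms. -/
def TnSet (n : ℕ) : Set (Circle ≃ₜ Circle) := { f | InT n f }

/-- The left endpoints of the standard `n`-adic subdivision `P_k` obtained by `k+1`
subdivision steps, each applied to the rightmost interval, listed in increasing order;
the index `j = (k+1)*(n-1)+1` gives the final right endpoint `1`. -/
def ckPt (n k j : ℕ) : ℝ :=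
  if j = (k + 1) * (n - 1) + 1 then 1
  else (1 - (n : ℝ) ^ (-(j / (n - 1) : ℕ) : ℤ)) +
    (j % (n - 1) : ℕ) * (n : ℝ) ^ (-((j / (n - 1) : ℕ) + 1 : ℕ) : ℤ)

/-- `f` is the element `c_k` of `T_n`: writing `m = (k+1)(n-1)+1` and
`I_0, …, I_{m-1}` for the intervals of the standard subdivision `P_k`, `f` maps each
`I_j` affinely onto `I_{(j+1) mod m}`. -/
def IsCk (n k : ℕ) (f : Circle ≃ₜ Circle) : Prop :=
  ∀ j < (k + 1) * (n - 1) + 1, ∀ x ∈ Set.Icc (ckPt n k j) (ckPt n k (j + 1)),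
    f (x : Circle) =
      ((ckPt n k ((j + 1) % ((k + 1) * (n - 1) + 1)) +
        (ckPt n k ((j + 1) % ((k + 1) * (n - 1) + 1) + 1) -
          ckPt n k ((j + 1) % ((k + 1) * (n - 1) + 1))) /
          (ckPt n k (j + 1) - ckPt n k j) * (x - ckPt n k j) : ℝ) : Circle)


/-!
The intervals `I_j = [t_j, t_{j+1}]` of `P_k` all have length a power of `n`, so the affine maps
`I_j → I_{j+1 mod m}` have slopes that are powers of `n`. Glued together they form a continuous,
strictly increasing, piecewise linear lift `F` with `F (x + 1) = F x + 1` whose breakpoints and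
values at breakpoints are `n`-adic, hence an element of `T_n` realising `c_k`.

Conversely, if `f` maps every `I_j` affinely onto `I_{j+1 mod m}`, then `f ^ i` maps `I_j` affinely
onto `I_{j+i mod m}`. So `f ^ m` is the identity, while for `0 < i < m` it moves `0 = t_0` to
`t_i ∈ (0, 1)`.
-/

open Set

section NAdic

variable {n : ℕ} (hn : n ≠ 0)

def nAdicSubring : Subring ℝ where
  carrier := {x | IsNAdic n x}
  zero_mem' := ⟨0, 0, by simp⟩
  one_mem' := ⟨1, 0, by simp⟩
  add_mem' := by
    rintro _ _ ⟨a, e, rfl⟩ ⟨b, f, rfl⟩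
    have : (n : ℝ) ≠ 0 := by exact_mod_cast hn
    refine ⟨a * n ^ f + b * n ^ e, e + f, ?_⟩
    push_cast
    field_simp
    ring
  mul_mem' := by
    rintro _ _ ⟨a, e, rfl⟩ ⟨b, f, rfl⟩
    exact ⟨a * b, e + f, by push_cast; rw [pow_add, mul_div_mul_comm]⟩
  neg_mem' := by
    rintro _ ⟨a, e, rfl⟩
    exact ⟨-a, e, by push_cast; ring⟩

variable {hn}

theorem mem_nAdicSubring {x : ℝ} : x ∈ nAdicSubring hn ↔ IsNAdic n x := Iff.rfl

theorem zpow_mem_nAdicSubring (s : ℤ) : (n : ℝ) ^ s ∈ nAdicSubring hn := by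
  obtain ⟨d, rfl | rfl⟩ := Int.eq_nat_or_neg s
  · exact ⟨n ^ d, 0, by simp⟩
  · exact ⟨1, d, by simp⟩

theorem zpow_mul_mem_nAdicSubring_iff (s : ℤ) {x : ℝ} :
    (n : ℝ) ^ s * x ∈ nAdicSubring hn ↔ x ∈ nAdicSubring hn := by
  refine ⟨fun h => ?_, fun h => mul_mem (zpow_mem_nAdicSubring s) h⟩
  have hn' : (n : ℝ) ≠ 0 := by exact_mod_cast hn
  have := mul_mem (zpow_mem_nAdicSubring (-s)) h
  rwa [← mul_assoc, ← zpow_add₀ hn', neg_add_cancel, zpow_zero, one_mul] at this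

end NAdic

def homeomorphQuotient {G : Type*} [AddGroup G] [TopologicalSpace G] {S : AddSubgroup G}
    (e : G ≃ₜ G) (he : ∀ x, ∀ s ∈ S, e (x + s) = e x + s) : G ⧸ S ≃ₜ G ⧸ S :=
  Homeomorph.Quotient.congr e fun a b => by
    simp only [QuotientAddGroup.leftRel_apply]
    constructor
    · intro h
      have hb : e b = e a + (-a + b) := by rw [← he a _ h, add_neg_cancel_left]
      rwa [hb, neg_add_cancel_left]
    · intro h
      have hb : b = a + (-e a + e b) := e.injective (by rw [he a _ h, add_neg_cancel_left])
      rw [hb, neg_add_cancel_left]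
      exact h

def circleHomeomorph (F : ℝ → ℝ) (hF : StrictMono F) (hsurj : Function.Surjective F)
    (hz : ∀ x : ℝ, ∀ z : ℤ, F (x + z) = F x + z) : Circle ≃ₜ Circle :=
  homeomorphQuotient (hF.orderIsoOfSurjective F hsurj).toHomeomorph fun x s hs => by
    obtain ⟨z, rfl⟩ := AddSubgroup.mem_zmultiples_iff.1 hs
    simpa using hz x z

theorem image_nAdicPoints_eq {n : ℕ} {f : Circle ≃ₜ Circle} {F : ℝ → ℝ}
    (hf : IsLift f F) (hsurj : Function.Surjective F)
    (hF : ∀ x, IsNAdic n (F x) ↔ IsNAdic n x) :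
    f '' nAdicPoints n = nAdicPoints n := by
  ext p
  constructor
  · rintro ⟨_, ⟨x, hx, rfl⟩, rfl⟩
    exact ⟨F x, (hF x).2 hx, hf x⟩
  · rintro ⟨y, hy, rfl⟩
    obtain ⟨x, rfl⟩ := hsurj y
    exact ⟨x, ⟨x, (hF x).1 hy, rfl⟩, hf x⟩

theorem exists_mem_Ico_of_mem_Ico {α : Type*} [LinearOrder α] {t : ℕ → α} {m : ℕ} {x : α}
    (hx : x ∈ Ico (t 0) (t m)) : ∃ j < m, x ∈ Ico (t j) (t (j + 1)) := by
  classical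
  have hm : m ≠ 0 := by rintro rfl; exact (lt_irrefl _ (hx.1.trans_lt hx.2))
  have hex : ∃ j, x < t (j + 1) := ⟨m - 1, by rw [Nat.sub_add_cancel (by omega)]; exact hx.2⟩
  refine ⟨Nat.find hex, ?_, ?_, Nat.find_spec hex⟩
  · have := Nat.find_min' hex (m := m - 1) (by rw [Nat.sub_add_cancel (by omega)]; exact hx.2)
    omega
  · rcases h : Nat.find hex with _ | i
    · exact hx.1
    · exact not_lt.1 (Nat.find_min hex (by omega : i < Nat.find hex))

section PiecewiseLinear

variable (t w : ℕ → ℝ) (m : ℕ)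

-- `min x (t (i + 1)) - min x (t i)` is the length of `[t i, t (i + 1)] ∩ (-∞, x]`, so for
-- increasing `t` this is the continuous function vanishing at `t 0` with slope `w i` on
-- `[t i, t (i + 1)]`.
def piecewiseLinear (x : ℝ) : ℝ :=
  ∑ i ∈ Finset.range m, w i * (min x (t (i + 1)) - min x (t i))

theorem continuous_piecewiseLinear : Continuous (piecewiseLinear t w m) := by
  unfold piecewiseLinear
  fun_prop

variable {t w m}

theorem min_sub_min_le_min_sub_min {a b x y : ℝ} (hab : a ≤ b) (hxy : x ≤ y) :
    min x b - min x a ≤ min y b - min y a := by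
  simp only [min_def]
  split_ifs <;> linarith

theorem piecewiseLinear_eq_of_mem_Icc (ht : ∀ i < m, t i ≤ t (i + 1)) {j : ℕ} (hj : j < m)
    {x : ℝ} (hx : x ∈ Icc (t j) (t (j + 1))) :
    piecewiseLinear t w m x =
      ∑ i ∈ Finset.range j, w i * (t (i + 1) - t i) + w j * (x - t j) := by
  have hmono : MonotoneOn t (Iic m) :=
    monotoneOn_of_le_add_one ordConnected_Iic fun i _ _ hi => ht i (Nat.lt_of_succ_le hi)
  have hle : ∀ i ≤ j, t i ≤ x := fun i hi =>
    (hmono (mem_Iic.2 (by omega)) (mem_Iic.2 (by omega)) hi).trans hx.1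
  have hge : ∀ i, j < i → i ≤ m → x ≤ t i := fun i hi him =>
    hx.2.trans (hmono (mem_Iic.2 (by omega)) (mem_Iic.2 him) hi)
  rw [piecewiseLinear, ← Finset.sum_range_add_sum_Ico _ (Nat.succ_le_of_lt hj),
    Finset.sum_range_succ, min_eq_left hx.2, min_eq_right hx.1]
  have hlow : ∀ i ∈ Finset.range j,
      w i * (min x (t (i + 1)) - min x (t i)) = w i * (t (i + 1) - t i) := fun i hi => by
      rw [Finset.mem_range] at hi
      rw [min_eq_right (hle (i + 1) hi), min_eq_right (hle i hi.le)]
  have hhigh : ∀ i ∈ Finset.Ico (j + 1) m, w i * (min x (t (i + 1)) - min x (t i)) = 0 :=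
    fun i hi => by
      rw [Finset.mem_Ico] at hi
      rw [min_eq_left (hge (i + 1) (by omega) hi.2), min_eq_left (hge i hi.1 hi.2.le), sub_self,
        mul_zero]
  rw [Finset.sum_congr rfl hlow, Finset.sum_congr rfl hhigh, Finset.sum_const_zero, add_zero]

theorem strictMonoOn_piecewiseLinear (ht : ∀ i < m, t i ≤ t (i + 1)) (hw : ∀ i < m, 0 < w i) :
    StrictMonoOn (piecewiseLinear t w m) (Icc (t 0) (t m)) := by
  intro x hx y hy hxy
  have telescope : ∀ z ∈ Icc (t 0) (t m),
      ∑ i ∈ Finset.range m, (min z (t (i + 1)) - min z (t i)) = z - t 0 := fun z hz => by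
    rw [Finset.sum_range_sub (fun i => min z (t i)), min_eq_left hz.2, min_eq_right hz.1]
  obtain ⟨i, hi, hlt⟩ := Finset.exists_lt_of_sum_lt (s := Finset.range m)
    (f := fun i => min x (t (i + 1)) - min x (t i))
    (g := fun i => min y (t (i + 1)) - min y (t i))
    (by rw [telescope x hx, telescope y hy]; linarith)
  rw [Finset.mem_range] at hi
  refine Finset.sum_lt_sum (fun i hi => ?_)
    ⟨i, Finset.mem_range.2 hi, mul_lt_mul_of_pos_left hlt (hw i hi)⟩
  rw [Finset.mem_range] at hi
  exact mul_le_mul_of_nonneg_left (min_sub_min_le_min_sub_min (ht i hi) hxy.le) (hw i hi).le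

end PiecewiseLinear

section DegOneExtend

def degOneExtend (G : ℝ → ℝ) (x : ℝ) : ℝ := G (Int.fract x) + ⌊x⌋

variable {G : ℝ → ℝ}

theorem degOneExtend_add_intCast (x : ℝ) (z : ℤ) :
    degOneExtend G (x + z) = degOneExtend G x + z := by
  simp only [degOneExtend, Int.fract_add_intCast, Int.floor_add_intCast, Int.cast_add]
  ring

variable (hG : G 1 = G 0 + 1)
include hG

theorem degOneExtend_eq_of_mem_Icc {x : ℝ} (hx : x ∈ Icc 0 1) : degOneExtend G x = G x := by
  rcases hx.2.eq_or_lt with rfl | hx1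
  · simp [degOneExtend, hG]
  · rw [degOneExtend, Int.fract_eq_self.2 ⟨hx.1, hx1⟩, Int.floor_eq_zero_iff.2 ⟨hx.1, hx1⟩,
      Int.cast_zero, add_zero]

theorem continuous_degOneExtend (hc : ContinuousOn G (Icc 0 1)) : Continuous (degOneExtend G) := by
  have key : degOneExtend G = (fun y => G y - y) ∘ Int.fract + id := by
    ext x
    simp only [degOneExtend, Function.comp_apply, Pi.add_apply, id, Int.fract]
    ring
  rw [key]
  exact ((hc.sub continuousOn_id).comp_fract'' (by simp [hG])).add continuous_id

theorem strictMono_degOneExtend (hmono : StrictMonoOn G (Icc 0 1)) :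
    StrictMono (degOneExtend G) := by
  have hfract : ∀ x : ℝ, Int.fract x ∈ Icc (0 : ℝ) 1 :=
    fun x => ⟨Int.fract_nonneg x, (Int.fract_lt_one x).le⟩
  intro x y hxy
  rcases (Int.floor_mono hxy.le).eq_or_lt with hfl | hfl
  · have : Int.fract x < Int.fract y := by
      rw [Int.fract, Int.fract, hfl]
      linarith
    simp only [degOneExtend, hfl]
    linarith [hmono (hfract x) (hfract y) this]
  · have hx : G (Int.fract x) < G 1 :=
      hmono (hfract x) ⟨zero_le_one, le_rfl⟩ (Int.fract_lt_one x)
    have hy : G 0 ≤ G (Int.fract y) :=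
      (hmono.le_iff_le ⟨le_rfl, zero_le_one⟩ (hfract y)).2 (Int.fract_nonneg y)
    have : (⌊x⌋ : ℝ) + 1 ≤ ⌊y⌋ := by exact_mod_cast hfl
    simp only [degOneExtend]
    linarith

end DegOneExtend

section AffineIcc

def affineIcc (a b c d x : ℝ) : ℝ := c + (d - c) / (b - a) * (x - a)

variable {a b c d e f x : ℝ}

@[simp]
theorem affineIcc_left : affineIcc a b c d a = c := by simp [affineIcc]

theorem affineIcc_self (hab : a ≠ b) : affineIcc a b a b x = x := by
  rw [affineIcc, div_self (sub_ne_zero.2 hab.symm)]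
  ring

theorem affineIcc_affineIcc (hab : a ≠ b) (hcd : c ≠ d) :
    affineIcc c d e f (affineIcc a b c d x) = affineIcc a b e f x := by
  have := sub_ne_zero.2 hab.symm
  have := sub_ne_zero.2 hcd.symm
  simp only [affineIcc]
  field_simp
  ring

theorem affineIcc_mem_Icc (hab : a < b) (hcd : c ≤ d) (hx : x ∈ Icc a b) :
    affineIcc a b c d x ∈ Icc c d := by
  have hr : 0 ≤ (d - c) / (b - a) := div_nonneg (sub_nonneg.2 hcd) (sub_pos.2 hab).le
  refine ⟨le_add_of_nonneg_right (mul_nonneg hr (sub_nonneg.2 hx.1)), ?_⟩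
  calc affineIcc a b c d x ≤ c + (d - c) / (b - a) * (b - a) := by
        unfold affineIcc; gcongr; exact hx.2
    _ = d := by rw [div_mul_cancel₀ _ (sub_pos.2 hab).ne']; ring

end AffineIcc

structure IsCirclePartition (t : ℕ → ℝ) (m : ℕ) : Prop where
  zero : t 0 = 0
  last : t m = 1
  lt_succ : ∀ j < m, t j < t (j + 1)

def RotatesIntervals (t : ℕ → ℝ) (m : ℕ) (f : Circle ≃ₜ Circle) : Prop :=
  ∀ j < m, ∀ x ∈ Icc (t j) (t (j + 1)),
    f x = (affineIcc (t j) (t (j + 1)) (t ((j + 1) % m)) (t ((j + 1) % m + 1)) x : Circle)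

namespace IsCirclePartition

variable {t : ℕ → ℝ} {m : ℕ} (hP : IsCirclePartition t m)
include hP

theorem pos : 0 < m := by
  by_contra! h
  have := hP.last
  rw [Nat.le_zero.1 h, hP.zero] at this
  exact zero_ne_one this

theorem strictMonoOn : StrictMonoOn t (Iic m) :=
  strictMonoOn_Iic_of_lt_succ fun j hj => hP.lt_succ j hj

theorem mem_Icc {j : ℕ} (hj : j ≤ m) : t j ∈ Icc 0 1 := by
  rw [← hP.zero, ← hP.last]
  exact ⟨hP.strictMonoOn.monotoneOn (mem_Iic.2 (Nat.zero_le m)) (mem_Iic.2 hj) (Nat.zero_le j),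
    hP.strictMonoOn.monotoneOn (mem_Iic.2 hj) (mem_Iic.2 le_rfl) hj⟩

theorem mem_Ico {j : ℕ} (hj : j < m) : t j ∈ Ico 0 1 :=
  ⟨(hP.mem_Icc hj.le).1, hP.last ▸ hP.strictMonoOn (mem_Iic.2 hj.le) (mem_Iic.2 le_rfl) hj⟩

theorem exists_mem_Ico {x : ℝ} (hx : x ∈ Ico 0 1) : ∃ j < m, x ∈ Ico (t j) (t (j + 1)) :=
  exists_mem_Ico_of_mem_Ico (by rwa [hP.zero, hP.last])

variable {f : Circle ≃ₜ Circle} (hf : RotatesIntervals t m f)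
include hf

theorem pow_apply (i : ℕ) {j : ℕ} (hj : j < m) {x : ℝ} (hx : x ∈ Icc (t j) (t (j + 1))) :
    (f ^ i) x =
      (affineIcc (t j) (t (j + 1)) (t ((j + i) % m)) (t ((j + i) % m + 1)) x : Circle) := by
  induction i with
  | zero =>
    rw [add_zero, Nat.mod_eq_of_lt hj, affineIcc_self (hP.lt_succ j hj).ne]
    rfl
  | succ i ih =>
    have hl : (j + i) % m < m := Nat.mod_lt _ hP.pos
    rw [pow_succ']
    change f ((f ^ i) x) = _
    rw [ih, hf _ hl _ (affineIcc_mem_Icc (hP.lt_succ j hj) (hP.lt_succ _ hl).le hx),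
      affineIcc_affineIcc (hP.lt_succ j hj).ne (hP.lt_succ _ hl).ne, Nat.mod_add_mod, add_assoc]

theorem pow_card_eq_one : f ^ m = 1 := by
  ext p
  obtain ⟨x, rfl⟩ := QuotientAddGroup.mk_surjective p
  rw [← AddCircle.coe_fract]
  obtain ⟨j, hj, hx⟩ := hP.exists_mem_Ico ⟨Int.fract_nonneg x, Int.fract_lt_one x⟩
  rw [hP.pow_apply hf m hj (Ico_subset_Icc_self hx), Nat.add_mod_right, Nat.mod_eq_of_lt hj,
    affineIcc_self (hP.lt_succ j hj).ne]
  rfl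

theorem pow_ne_one {i : ℕ} (hi0 : 0 < i) (him : i < m) : f ^ i ≠ 1 := by
  intro hfi
  have h := hP.pow_apply hf i hP.pos (left_mem_Icc.2 (hP.lt_succ 0 hP.pos).le)
  rw [hfi, Nat.zero_add i, Nat.mod_eq_of_lt him, affineIcc_left, hP.zero] at h
  have hti : t i = t 0 := by
    rw [hP.zero]
    exact (AddCircle.coe_eq_zero_iff_of_mem_Ico (hP.mem_Ico him)).1 h.symm
  exact (hP.strictMonoOn (mem_Iic.2 (Nat.zero_le m)) (mem_Iic.2 him.le) hi0).ne' hti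

theorem orderOf_eq : orderOf f = m :=
  (orderOf_eq_iff hP.pos).2 ⟨hP.pow_card_eq_one hf, fun _ him hi0 => hP.pow_ne_one hf hi0 him⟩

end IsCirclePartition

section Rotation

variable (t : ℕ → ℝ) (m : ℕ)

def rotationSlope (j : ℕ) : ℝ :=
  (t ((j + 1) % m + 1) - t ((j + 1) % m)) / (t (j + 1) - t j)

def rotationLiftIcc (x : ℝ) : ℝ := t 1 + piecewiseLinear t (rotationSlope t m) m x

def rotationLift : ℝ → ℝ := degOneExtend (rotationLiftIcc t m)

variable {t m}

namespace IsCirclePartition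

variable (hP : IsCirclePartition t m)
include hP

theorem rotationSlope_pos {j : ℕ} (hj : j < m) : 0 < rotationSlope t m j :=
  div_pos (sub_pos.2 (hP.lt_succ _ (Nat.mod_lt _ hP.pos))) (sub_pos.2 (hP.lt_succ j hj))

theorem rotationLiftIcc_eq {j : ℕ} (hj : j < m) {x : ℝ} (hx : x ∈ Icc (t j) (t (j + 1))) :
    rotationLiftIcc t m x = t (j + 1) + rotationSlope t m j * (x - t j) := by
  have hgap : ∀ i ∈ Finset.range j,
      rotationSlope t m i * (t (i + 1) - t i) = t (i + 1 + 1) - t (i + 1) := fun i hi => by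
    rw [Finset.mem_range] at hi
    rw [rotationSlope, Nat.mod_eq_of_lt (by omega),
      div_mul_cancel₀ _ (sub_pos.2 (hP.lt_succ i (by omega))).ne']
  rw [rotationLiftIcc, piecewiseLinear_eq_of_mem_Icc (fun i hi => (hP.lt_succ i hi).le) hj hx,
    Finset.sum_congr rfl hgap, Finset.sum_range_sub (fun i => t (i + 1))]
  ring

theorem rotationLiftIcc_one : rotationLiftIcc t m 1 = rotationLiftIcc t m 0 + 1 := by
  obtain ⟨l, rfl⟩ : ∃ l, m = l + 1 := ⟨m - 1, by have := hP.pos; omega⟩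
  have h0 := hP.rotationLiftIcc_eq (Nat.succ_pos l) (x := t 0)
    (left_mem_Icc.2 (hP.lt_succ 0 (Nat.succ_pos l)).le)
  have h1 := hP.rotationLiftIcc_eq (Nat.lt_succ_self l) (x := t (l + 1))
    (right_mem_Icc.2 (hP.lt_succ l (Nat.lt_succ_self l)).le)
  rw [hP.zero] at h0
  rw [rotationSlope, Nat.mod_self,
    div_mul_cancel₀ _ (sub_pos.2 (hP.lt_succ l (Nat.lt_succ_self l))).ne', hP.last] at h1
  rw [h0, h1, hP.zero]
  ring

theorem rotationLift_eq {j : ℕ} (hj : j < m) {x : ℝ} (hx : x ∈ Icc (t j) (t (j + 1))) :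
    rotationLift t m x = t (j + 1) + rotationSlope t m j * (x - t j) := by
  have hx01 : x ∈ Icc 0 1 := ⟨(hP.mem_Icc hj.le).1.trans hx.1, hx.2.trans (hP.mem_Icc hj).2⟩
  rw [rotationLift, degOneExtend_eq_of_mem_Icc hP.rotationLiftIcc_one hx01,
    hP.rotationLiftIcc_eq hj hx]

theorem strictMono_rotationLift : StrictMono (rotationLift t m) := by
  have := strictMonoOn_piecewiseLinear (fun i hi => (hP.lt_succ i hi).le)
    fun i hi => hP.rotationSlope_pos hi
  rw [hP.zero, hP.last] at this
  exact strictMono_degOneExtend hP.rotationLiftIcc_one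
    fun x hx y hy hxy => by simpa only [rotationLiftIcc, add_lt_add_iff_left] using this hx hy hxy

theorem continuous_rotationLift : Continuous (rotationLift t m) :=
  continuous_degOneExtend hP.rotationLiftIcc_one
    (continuous_const.add (continuous_piecewiseLinear _ _ _)).continuousOn

theorem surjective_rotationLift : Function.Surjective (rotationLift t m) :=
  let F : CircleDeg1Lift := ⟨⟨rotationLift t m, hP.strictMono_rotationLift.monotone⟩,
    fun x => by exact_mod_cast degOneExtend_add_intCast x 1⟩
  F.continuous_iff_surjective.1 hP.continuous_rotationLift

def rotation : Circle ≃ₜ Circle :=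
  circleHomeomorph (rotationLift t m) hP.strictMono_rotationLift hP.surjective_rotationLift
    degOneExtend_add_intCast

theorem rotation_apply_coe (x : ℝ) : hP.rotation x = (rotationLift t m x : Circle) := rfl

theorem rotatesIntervals_rotation : RotatesIntervals t m hP.rotation := by
  intro j hj x hx
  rw [rotation_apply_coe, hP.rotationLift_eq hj hx, affineIcc, rotationSlope]
  rcases Nat.lt_or_ge (j + 1) m with hlt | hge
  · rw [Nat.mod_eq_of_lt hlt]
  · have hlast : j + 1 = m := by omega
    have hend : t (j + 1) = t 0 + 1 := by rw [hlast, hP.last, hP.zero, zero_add]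
    rw [hlast, Nat.mod_self, ← hlast, ← AddCircle.coe_add_period 1 (t 0 + _), hend]
    congr 1
    ring

theorem isNAdic_rotationLift_iff {n : ℕ} (hn : n ≠ 0) (ht : ∀ j ≤ m, IsNAdic n (t j))
    {s : ℕ → ℤ} (hs : ∀ j < m, rotationSlope t m j = (n : ℝ) ^ s j) (x : ℝ) :
    IsNAdic n (rotationLift t m x) ↔ IsNAdic n x := by
  obtain ⟨j, hj, hx⟩ := hP.exists_mem_Ico ⟨Int.fract_nonneg x, Int.fract_lt_one x⟩
  have hmem : ∀ i ≤ m, t i ∈ nAdicSubring hn := ht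
  simp only [← mem_nAdicSubring (hn := hn)]
  rw [← Int.fract_add_floor x, rotationLift, degOneExtend_add_intCast, ← rotationLift,
    hP.rotationLift_eq hj (Ico_subset_Icc_self hx), hs j hj,
    add_mem_cancel_right (intCast_mem _ _), add_mem_cancel_right (intCast_mem _ _),
    add_mem_cancel_left (hmem _ hj), zpow_mul_mem_nAdicSubring_iff,
    sub_eq_add_neg, add_mem_cancel_right (neg_mem (hmem j hj.le))]

theorem rotation_mem_TnSet {n : ℕ} (hn : n ≠ 0) (ht : ∀ j ≤ m, IsNAdic n (t j))
    {s : ℕ → ℤ} (hs : ∀ j < m, rotationSlope t m j = (n : ℝ) ^ s j) :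
    hP.rotation ∈ TnSet n := by
  refine ⟨image_nAdicPoints_eq hP.rotation_apply_coe hP.surjective_rotationLift
      (hP.isNAdic_rotationLift_iff hn ht hs), rotationLift t m, hP.strictMono_rotationLift,
    hP.rotation_apply_coe, fun x => by exact_mod_cast degOneExtend_add_intCast x 1,
    m, t, s, fun j => t (j + 1) - n ^ s j * t j, hP.pos, hP.zero, hP.last, hP.lt_succ, ht,
    fun j hj x hx => ?_⟩
  rw [hP.rotationLift_eq hj hx, hs j hj]
  ring

end IsCirclePartition

end Rotation

section Ck

variable {n k : ℕ}

def ckCard (n k : ℕ) : ℕ := (k + 1) * (n - 1) + 1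

def ckDepth (n k j : ℕ) : ℕ := if j + 1 = ckCard n k then k + 1 else j / (n - 1) + 1

theorem ckPt_ckCard : ckPt n k (ckCard n k) = 1 := if_pos rfl

theorem ckPt_isNAdic (hn : n ≠ 0) (j : ℕ) : IsNAdic n (ckPt n k j) := by
  rw [← mem_nAdicSubring (hn := hn), ckPt]
  split_ifs
  · exact one_mem _
  · exact add_mem (sub_mem (one_mem _) (zpow_mem_nAdicSubring _))
      (mul_mem (natCast_mem _ _) (zpow_mem_nAdicSubring _))

theorem ckPt_mul_add {q r : ℕ} (hr : r < n - 1)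
    (hne : (n - 1) * q + r ≠ ckCard n k) :
    ckPt n k ((n - 1) * q + r) = 1 - ((n : ℝ) ^ q)⁻¹ + r * ((n : ℝ) ^ (q + 1))⁻¹ := by
  have hw : 0 < n - 1 := by omega
  rw [ckCard] at hne
  rw [ckPt, if_neg hne, Nat.mul_add_div hw, Nat.div_eq_of_lt hr, Nat.mul_add_mod,
    Nat.mod_eq_of_lt hr, add_zero, zpow_neg, zpow_neg, zpow_natCast, zpow_natCast]

theorem ckPt_succ_sub (hn : 2 ≤ n) {j : ℕ} (hj : j < ckCard n k) :
    ckPt n k (j + 1) - ckPt n k j = ((n : ℝ) ^ ckDepth n k j)⁻¹ := by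
  have hw : 0 < n - 1 := by omega
  have hn0 : (n : ℝ) ≠ 0 := Nat.cast_ne_zero.2 (by omega)
  rcases Nat.lt_or_ge (j + 1) (ckCard n k) with hlt | hge
  · obtain ⟨q, r, hr, rfl⟩ : ∃ q r, r < n - 1 ∧ j = (n - 1) * q + r :=
      ⟨j / (n - 1), j % (n - 1), Nat.mod_lt _ hw, (Nat.div_add_mod j (n - 1)).symm⟩
    rw [ckDepth, if_neg hlt.ne, Nat.mul_add_div hw, Nat.div_eq_of_lt hr, add_zero,
      ckPt_mul_add hr (by omega)]
    -- `I_j` is the `r`-th of the `n - 1` intervals of length `n ^ (-(q + 1))` split off at step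
    -- `q + 1`; the next interval is either in the same batch or the first of the next one.
    rcases Nat.lt_or_ge (r + 1) (n - 1) with hr1 | hr1
    · rw [add_assoc, ckPt_mul_add hr1 (by rw [← add_assoc]; exact hlt.ne)]
      push_cast
      ring
    · have hidx : (n - 1) * q + r + 1 = (n - 1) * (q + 1) + 0 := by
        rw [mul_add, mul_one, add_zero, add_assoc, (by omega : r + 1 = n - 1)]
      have hr2 : (r : ℝ) = n - 2 := by
        rw [eq_sub_iff_add_eq]
        exact_mod_cast (by omega : r + 2 = n)
      rw [hidx, ckPt_mul_add hw (hidx ▸ hlt.ne), hr2, pow_succ]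
      field_simp
      ring
  · have hj_last : j = (n - 1) * (k + 1) + 0 := by
      rw [mul_comm]
      exact Nat.add_right_cancel (show j + 1 = ckCard n k by omega)
    rw [ckDepth, if_pos (by omega), show j + 1 = ckCard n k by omega, ckPt_ckCard, hj_last,
      ckPt_mul_add hw (by omega)]
    push_cast
    ring

theorem isCirclePartition_ckPt (hn : 2 ≤ n) : IsCirclePartition (ckPt n k) (ckCard n k) where
  zero := by simp [ckPt]
  last := ckPt_ckCard
  lt_succ j hj := sub_pos.1 (by rw [ckPt_succ_sub hn hj]; positivity)

theorem rotationSlope_ckPt (hn : 2 ≤ n) {j : ℕ} (hj : j < ckCard n k) :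
    rotationSlope (ckPt n k) (ckCard n k) j =
      (n : ℝ) ^ ((ckDepth n k j : ℤ) - ckDepth n k ((j + 1) % ckCard n k)) := by
  rw [rotationSlope, ckPt_succ_sub hn (Nat.mod_lt _ (Nat.succ_pos _)), ckPt_succ_sub hn hj,
    zpow_sub₀ (Nat.cast_ne_zero.2 (by omega)), zpow_natCast, zpow_natCast, inv_div_inv]

theorem isCk_iff_rotatesIntervals {f : Circle ≃ₜ Circle} :
    IsCk n k f ↔ RotatesIntervals (ckPt n k) (ckCard n k) f := Iff.rfl

end Ck

/-- Let `n ≥ 2` and `k ≥ 0`.  The element `c_k ∈ T_n` exists and has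
order exactly `(k+1)(n-1)+1`.  (In particular, `T_n` contains torsion elements of
arbitrarily large order.) -/
theorem ck_orderOf (n : ℕ) (hn : 2 ≤ n) (k : ℕ) :
    (∃ f : Circle ≃ₜ Circle, f ∈ TnSet n ∧ IsCk n k f) ∧
    (∀ f : Circle ≃ₜ Circle, f ∈ TnSet n → IsCk n k f →
      orderOf f = (k + 1) * (n - 1) + 1) := by
  have hP := isCirclePartition_ckPt (k := k) hn
  refine ⟨⟨hP.rotation, ?_, isCk_iff_rotatesIntervals.2 hP.rotatesIntervals_rotation⟩,
    fun f _ hf => hP.orderOf_eq (isCk_iff_rotatesIntervals.1 hf)⟩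
  exact hP.rotation_mem_TnSet (by omega) (fun j _ => ckPt_isNAdic (by omega) j)
    (fun j hj => rotationSlope_ckPt hn hj)

end ThompsonPaper
end
end
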